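/- arXiv:2102.04115 — 2 statements merged into one kernel-verified Lean document; each statement's English description precedes it below -/
import Mathlib

section
/- For complex a with a ∉ {0,-1,-2,...}, Γ(a+z)Γ(a-z)/Γ(a)^2 = ∏_{k=0}^∞ (1 - (z/(a+k))^2)^{-1} for all z with z ≠ ±(a+k) for all k. -/
/-!
Euler's limit formula `Γ(s) = lim n^s n! / (s (s+1) ⋯ (s+n))` turns the `(n+1)`-st partial
product of `∏ (1 - (z/(a+k))^2) = ∏ (a+k+z)(a+k-z)/(a+k)^2` into the quotient of Euler's
approximants `Γₙ(a)^2 / (Γₙ(a+z) Γₙ(a-z))`, since the powers `n^s` and the factorials cancel.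
The product converges because `∑ |a+k|⁻²` does, so its value is `Γ(a)^2 / (Γ(a+z) Γ(a-z))`;
this is nonzero, and inverting factorwise gives the identity.
-/

open Complex Filter Topology
open scoped Nat

lemma one_sub_div_sq_eq {w : ℂ} (z : ℂ) (hw : w ≠ 0) :
    1 - (z / w) ^ 2 = (w + z) * (w - z) / w ^ 2 := by
  field_simp
  ring

namespace Complex

lemma summable_inv_add_natCast_sq (a : ℂ) : Summable fun k : ℕ => ((a + k) ^ 2)⁻¹ := by
  have := (EisensteinSeries.linear_right_summable a 1 le_rfl)
  simp only [Int.cast_one, one_mul, zpow_ofNat] at this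
  exact (summable_int_iff_summable_nat_and_neg.mp this).1

lemma multipliable_one_sub_div_add_natCast_sq (a z : ℂ) :
    Multipliable fun k : ℕ => 1 - (z / (a + k)) ^ 2 := by
  have := Complex.multipliable_one_add_of_summable
    ((summable_inv_add_natCast_sq a).mul_left (-z ^ 2))
  convert this using 2 with k
  rw [div_pow, div_eq_mul_inv, sub_eq_add_neg, neg_mul]

lemma GammaSeq_sq_div_GammaSeq_mul_GammaSeq (a z : ℂ) {n : ℕ} (hn : n ≠ 0) :
    GammaSeq a n ^ 2 / (GammaSeq (a + z) n * GammaSeq (a - z) n) =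
      ∏ k ∈ Finset.range (n + 1), (a + k + z) * (a + k - z) / (a + k) ^ 2 := by
  have hpow : (n : ℂ) ^ (a + z) * (n : ℂ) ^ (a - z) = ((n : ℂ) ^ a) ^ 2 := by
    rw [← cpow_add _ _ (Nat.cast_ne_zero.mpr hn), ← cpow_nat_mul]
    ring_nf
  have hna : (n : ℂ) ^ a ≠ 0 := by simp [hn]
  have hfact : (n ! : ℂ) ≠ 0 := Nat.cast_ne_zero.mpr n.factorial_ne_zero
  have hfactor (k : ℕ) : (a + k + z) * (a + k - z) / (a + k) ^ 2 =
      (a + z + k) * (a - z + k) * ((a + k) ^ 2)⁻¹ := by ring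
  simp only [hfactor, GammaSeq, div_eq_mul_inv, Finset.prod_mul_distrib, Finset.prod_inv_distrib,
    Finset.prod_pow]
  field_simp
  rw [mul_assoc _ ((n : ℂ) ^ (a + z)), hpow]
  field_simp

lemma hasProd_one_sub_div_add_natCast_sq {a z : ℂ} (ha : ∀ n : ℕ, a ≠ -n)
    (h_add : ∀ n : ℕ, a + z ≠ -n) (h_sub : ∀ n : ℕ, a - z ≠ -n) :
    HasProd (fun k : ℕ => 1 - (z / (a + k)) ^ 2)
      (Gamma a ^ 2 / (Gamma (a + z) * Gamma (a - z))) := by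
  rw [(multipliable_one_sub_div_add_natCast_sq a z).hasProd_iff_tendsto_nat,
    ← tendsto_add_atTop_iff_nat 1]
  have hGammaSeq : Tendsto (fun n => GammaSeq a n ^ 2 / (GammaSeq (a + z) n * GammaSeq (a - z) n))
      atTop (𝓝 (Gamma a ^ 2 / (Gamma (a + z) * Gamma (a - z)))) :=
    ((GammaSeq_tendsto_Gamma a).pow 2).div
      ((GammaSeq_tendsto_Gamma (a + z)).mul (GammaSeq_tendsto_Gamma (a - z)))
      (mul_ne_zero (Gamma_ne_zero h_add) (Gamma_ne_zero h_sub))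
  refine hGammaSeq.congr' ?_
  filter_upwards [eventually_ne_atTop 0] with n hn
  rw [GammaSeq_sq_div_GammaSeq_mul_GammaSeq a z hn]
  refine Finset.prod_congr rfl fun k _ => (one_sub_div_sq_eq z ?_).symm
  exact fun h => ha k (eq_neg_of_add_eq_zero_left h)

end Complex

theorem stmt_8 (a : ℂ) (ha : ∀ n : ℕ, a ≠ -(n : ℂ))
    (z : ℂ) (hz : ∀ k : ℕ, z ≠ a + k ∧ z ≠ -(a + k)) :
    Complex.Gamma (a + z) * Complex.Gamma (a - z) / Complex.Gamma a ^ 2 =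
      ∏' k : ℕ, (1 - (z / (a + k)) ^ 2)⁻¹ := by
  have h_add : ∀ n : ℕ, a + z ≠ -n := fun n h => (hz n).2 (by linear_combination h)
  have h_sub : ∀ n : ℕ, a - z ≠ -n := fun n h => (hz n).1 (by linear_combination -h)
  have hquot : Gamma a ^ 2 / (Gamma (a + z) * Gamma (a - z)) ≠ 0 :=
    div_ne_zero (pow_ne_zero 2 (Gamma_ne_zero ha))
      (mul_ne_zero (Gamma_ne_zero h_add) (Gamma_ne_zero h_sub))
  rw [((hasProd_one_sub_div_add_natCast_sq ha h_add h_sub).inv₀ hquot).tprod_eq, inv_div]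
end

section
/- ∑_{k=0}^∞ (-1)^{k(k+1)/2} / (2k+1)^2 = √2 π² / 16. -/
/-!
The Fourier series of the Bernoulli polynomial `B₂` gives
`∑ cos (n θ) / n² = π²/6 - π θ/2 + θ²/4` on `[0, 2π]`. Subtracting the even frequencies, i.e. a
quarter of the same series at `2θ`, leaves `∑ cos ((2k+1) θ) / (2k+1)² = π (π - 2θ) / 8` on
`[0, π]`. At `θ = π/4` the cosines are `(-1)^(k(k+1)/2) · √2/2`, with period 4 in `k`.
-/

open Real

theorem HasSum.odd_of_even {G : Type*} [AddCommGroup G] [UniformSpace G] [IsUniformAddGroup G]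
    [CompleteSpace G] [T2Space G] {f : ℕ → G} {a b : G} (hf : HasSum f a)
    (he : HasSum (fun k ↦ f (2 * k)) b) : HasSum (fun k ↦ f (2 * k + 1)) (a - b) := by
  have ho := (hf.summable.comp_injective fun m n h ↦ by omega :
    Summable fun k ↦ f (2 * k + 1)).hasSum
  rw [← (he.even_add_odd ho).unique hf, add_sub_cancel_left]
  exact ho

theorem hasSum_cos_mul_div_sq {θ : ℝ} (h₀ : 0 ≤ θ) (h₁ : θ ≤ 2 * π) :
    HasSum (fun n : ℕ ↦ cos (n * θ) / n ^ 2) (π ^ 2 / 6 - π * θ / 2 + θ ^ 2 / 4) := by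
  have hx : θ / (2 * π) ∈ Set.Icc (0 : ℝ) 1 :=
    ⟨by positivity, (div_le_one (by positivity)).2 h₁⟩
  have h := hasSum_one_div_nat_pow_mul_cos one_ne_zero hx
  rw [← bernoulliFun, Nat.mul_one, bernoulliFun_two] at h
  convert h using 1
  · ext n
    rw [show 2 * π * n * (θ / (2 * π)) = n * θ by field_simp]
    ring
  · field_simp
    norm_num [Nat.factorial]
    ring

theorem hasSum_cos_odd_mul_div_sq {θ : ℝ} (h₀ : 0 ≤ θ) (h₁ : θ ≤ π) :
    HasSum (fun k : ℕ ↦ cos ((2 * k + 1) * θ) / (2 * k + 1) ^ 2) (π * (π - 2 * θ) / 8) := by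
  have he : HasSum (fun k : ℕ ↦ cos ((2 * k : ℕ) * θ) / ((2 * k : ℕ) : ℝ) ^ 2)
      ((π ^ 2 / 6 - π * (2 * θ) / 2 + (2 * θ) ^ 2 / 4) / 4) :=
    ((hasSum_cos_mul_div_sq (by linarith) (by linarith)).div_const 4).congr_fun fun k ↦ by
      push_cast
      ring_nf
  have h := (hasSum_cos_mul_div_sq h₀ (by linarith)).odd_of_even he
  rw [show π ^ 2 / 6 - π * θ / 2 + θ ^ 2 / 4
      - (π ^ 2 / 6 - π * (2 * θ) / 2 + (2 * θ) ^ 2 / 4) / 4 = π * (π - 2 * θ) / 8 by ring] at h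
  exact h.congr_fun fun k ↦ by push_cast; rfl

theorem neg_one_pow_triangle_add_four (k : ℕ) :
    (-1 : ℝ) ^ ((k + 4) * (k + 4 + 1) / 2) = (-1) ^ (k * (k + 1) / 2) := by
  obtain ⟨c, hc⟩ := Nat.even_mul_succ_self k
  have h : (k + 4) * (k + 4 + 1) / 2 = k * (k + 1) / 2 + 2 * (2 * k + 5) := by
    have : (k + 4) * (k + 4 + 1) = k * (k + 1) + (8 * k + 20) := by ring
    omega
  rw [h, pow_add, pow_mul, neg_one_sq, one_pow, mul_one]

theorem cos_odd_mul_pi_div_four (k : ℕ) :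
    cos ((2 * k + 1) * (π / 4)) = (-1) ^ (k * (k + 1) / 2) * (√2 / 2) := by
  induction k using Nat.strong_induction_on with
  | _ k ih =>
    rcases lt_or_ge k 4 with hk | hk
    · interval_cases k
      · norm_num
      · rw [show (2 * ((1 : ℕ) : ℝ) + 1) * (π / 4) = π - π / 4 by push_cast; ring,
          cos_pi_sub, cos_pi_div_four]
        norm_num
      · rw [show (2 * ((2 : ℕ) : ℝ) + 1) * (π / 4) = π / 4 + π by push_cast; ring,
          cos_add_pi, cos_pi_div_four]
        norm_num
      · rw [show (2 * ((3 : ℕ) : ℝ) + 1) * (π / 4) = -(π / 4) + 2 * π by push_cast; ring,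
          cos_add_two_pi, cos_neg, cos_pi_div_four]
        norm_num
    · obtain ⟨m, rfl⟩ : ∃ m, k = m + 4 := ⟨k - 4, by omega⟩
      rw [show (2 * ((m + 4 : ℕ) : ℝ) + 1) * (π / 4) = (2 * m + 1) * (π / 4) + 2 * π by
          push_cast; ring,
        cos_add_two_pi, ih m (by omega), neg_one_pow_triangle_add_four]

theorem stmt_16 :
    ∑' k : ℕ, (-1 : ℝ) ^ (k * (k + 1) / 2) / (2 * (k : ℝ) + 1) ^ 2 =
      Real.sqrt 2 * Real.pi ^ 2 / 16 := by
  have h := (hasSum_cos_odd_mul_div_sq (θ := π / 4) (by positivity)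
    (by linarith [pi_pos])).mul_left √2
  have hsq : √2 * √2 = 2 := mul_self_sqrt zero_le_two
  simp only [cos_odd_mul_pi_div_four] at h
  convert h.tsum_eq using 1
  · congr 1 with k
    linear_combination ((-1) ^ (k * (k + 1) / 2) / (2 * (k : ℝ) + 1) ^ 2 / 2) * hsq.symm
  · ring
end
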